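/- Let 1 < α ≤ 2, let M ≥ 2 be an integer, let h > 0, and let C be the (M−1)×(M−1) Toeplitz matrix with entries C_{ij} = c_{i−j}^(α). Then there exists a real symmetric positive semidefinite matrix S (namely the square root C^{1/2} of C) such that, setting Λ^α = h^{−α/2} S, one has (Δ_h^α U₁, U₂) = (Λ^α U₁, Λ^α U₂) for all vectors U₁, U₂ ∈ ℝ^{M−1}, where Δ_h^α U = h^{−α} C U and (u, v) = h ∑_{j=1}^{M−1} u_j v_j. -/

import Mathlib

/-!
With `W(b) = ∫₀^{π/2} sin^α t · cos (2bt) dt`, integrating the derivative of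
`sin^{α+1} t · cos ((2k+1)t)`, which vanishes at `0` and `π/2`, gives
`(α + 2k + 2) W(k+1) = (2k - α) W(k)`: the two-term recurrence satisfied by `c_k` through
`Γ(x+1) = x Γ(x)`. Hence `c_k = (c_0 / W(0)) W(k)` with `c_0, W(0) > 0`, and the quadratic form of
`C` is `(c_0 / W(0)) ∫₀^{π/2} sin^α t · |∑_j x_j e^{2ijt}|² dt ≥ 0`. So `C` is positive
semidefinite, `S = C^{1/2}` exists, and the identity is `(C U₁, U₂) = (S U₁, S U₂)` after splitting
`h^{-α} = h^{-α/2} h^{-α/2}`.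
-/

/-- The fractional centered difference coefficients
`c_k^(α) = (−1)^k Γ(α+1) / (Γ(α/2 − k + 1) Γ(α/2 + k + 1))`,
interpreted as `0` when one of the Gamma arguments is a nonpositive integer. -/
noncomputable def fracCoeff (α : ℝ) (k : ℤ) : ℝ :=
  (-1 : ℝ) ^ k * Real.Gamma (α + 1) /
    (Real.Gamma (α / 2 - k + 1) * Real.Gamma (α / 2 + k + 1))

open Real intervalIntegral

noncomputable def sinPowMoment (α b : ℝ) : ℝ := ∫ t in (0)..(π / 2), sin t ^ α * cos (2 * b * t)

section

variable {α : ℝ} {ι : Type*} [Fintype ι]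

lemma continuous_sin_rpow_mul_cos (hα : 0 ≤ α) (b : ℝ) :
    Continuous fun t : ℝ => sin t ^ α * cos (2 * b * t) := by
  fun_prop (disch := exact hα)

lemma sin_rpow_add_one (hα : 0 ≤ α) (t : ℝ) : sin t ^ (α + 1) = sin t ^ α * sin t := by
  rcases eq_or_ne (sin t) 0 with h0 | h0
  · rw [h0, zero_rpow (by linarith), mul_zero]
  · exact rpow_add_one h0 α

lemma hasDerivAt_sin_rpow_mul_cos (hα : 0 ≤ α) (b t : ℝ) :
    HasDerivAt (fun t : ℝ => sin t ^ (α + 1) * cos ((2 * b + 1) * t))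
      ((α - 2 * b) / 2 * (sin t ^ α * cos (2 * b * t))
        + (α + 2 * b + 2) / 2 * (sin t ^ α * cos (2 * (b + 1) * t))) t := by
  have hpow := (hasDerivAt_sin t).rpow_const (p := α + 1) (Or.inr (by linarith))
  have hcos := (((hasDerivAt_id t).const_mul (2 * b + 1))).cos
  simp only [add_sub_cancel_right, id, mul_one] at hpow hcos
  refine (hpow.mul hcos).congr_deriv ?_
  rw [sin_rpow_add_one hα, show 2 * b * t = (2 * b + 1) * t - t by ring,
    show 2 * (b + 1) * t = (2 * b + 1) * t + t by ring, cos_sub, cos_add]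
  ring

lemma sinPowMoment_succ (hα : 0 ≤ α) (k : ℕ) :
    (α + 2 * k + 2) * sinPowMoment α (k + 1) = (2 * k - α) * sinPowMoment α k := by
  have hint : ∀ (c b : ℝ), IntervalIntegrable (fun t => c * (sin t ^ α * cos (2 * b * t)))
      MeasureTheory.volume 0 (π / 2) := fun c b =>
    ((continuous_sin_rpow_mul_cos hα b).const_mul c).intervalIntegrable _ _
  have hFTC := integral_eq_sub_of_hasDerivAt (fun t _ => hasDerivAt_sin_rpow_mul_cos hα k t)
    ((hint _ _).add (hint _ _))
  have hend : cos ((2 * k + 1) * (π / 2)) = 0 := by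
    rw [show (2 * (k : ℝ) + 1) * (π / 2) = k * π + π / 2 by ring, cos_add_pi_div_two,
      sin_nat_mul_pi, neg_zero]
  rw [integral_add (hint _ _) (hint _ _), integral_const_mul, integral_const_mul, hend, mul_zero,
    sin_zero, zero_rpow (by linarith), zero_mul, sub_zero] at hFTC
  unfold sinPowMoment
  linarith

lemma sinPowMoment_neg (b : ℝ) : sinPowMoment α (-b) = sinPowMoment α b := by
  simp only [sinPowMoment, mul_neg, neg_mul, cos_neg]

lemma sinPowMoment_zero_pos (hα : 0 ≤ α) : 0 < sinPowMoment α 0 := by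
  refine intervalIntegral_pos_of_pos_on ((continuous_sin_rpow_mul_cos hα 0).intervalIntegrable _ _)
    (fun t ht => ?_) (by positivity)
  rw [mul_zero, zero_mul, cos_zero, mul_one]
  exact rpow_pos_of_pos (sin_pos_of_pos_of_lt_pi ht.1 (by linarith [ht.2, pi_pos])) α

lemma fracCoeff_neg (k : ℤ) : fracCoeff α (-k) = fracCoeff α k := by
  rw [fracCoeff, fracCoeff, zpow_neg, ← inv_zpow, inv_neg_one, Int.cast_neg, sub_neg_eq_add,
    ← sub_eq_add_neg, mul_comm (Gamma _)]

lemma fracCoeff_zero_pos (hα : 0 ≤ α) : 0 < fracCoeff α 0 := by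
  unfold fracCoeff
  have := Gamma_pos_of_pos (show 0 < α + 1 by linarith)
  have := Gamma_pos_of_pos (show 0 < α / 2 + 1 by linarith)
  simp only [zpow_zero, Int.cast_zero, sub_zero, add_zero, one_mul]
  positivity

lemma fracCoeff_succ (hα : 0 ≤ α) (k : ℕ) :
    (α / 2 + k + 1) * fracCoeff α (k + 1) = (k - α / 2) * fracCoeff α k := by
  have hq : 0 < α / 2 + k + 1 := by positivity
  have hQ : 0 < Gamma (α / 2 + k + 1) := Gamma_pos_of_pos hq
  have hnum : fracCoeff α (k + 1) = -((-1) ^ (k : ℤ) * Gamma (α + 1) /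
      (Gamma (α / 2 - k) * ((α / 2 + k + 1) * Gamma (α / 2 + k + 1)))) := by
    rw [fracCoeff, zpow_add_one₀ (by norm_num), ← Gamma_add_one hq.ne']
    push_cast
    ring_nf
  rcases eq_or_ne (α / 2 - k) 0 with hk | hk
  · -- `Gamma 0 = 0` in Mathlib, so `fracCoeff α (k + 1) = 0`, as in the paper's convention.
    rw [hnum, hk, Gamma_zero, show (k : ℝ) - α / 2 = 0 by linarith]
    simp
  rw [hnum, fracCoeff, show α / 2 - ((k : ℤ) : ℝ) + 1 = α / 2 - k + 1 by push_cast; ring,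
    Gamma_add_one hk, Int.cast_natCast]
  rcases eq_or_ne (Gamma (α / 2 - k)) 0 with hP | hP
  · simp [hP]
  have hk' : α - 2 * k ≠ 0 := fun h => hk (by linarith)
  field_simp
  ring

lemma fracCoeff_mul_sinPowMoment_zero (hα : 0 ≤ α) (k : ℤ) :
    fracCoeff α k * sinPowMoment α 0 = fracCoeff α 0 * sinPowMoment α k := by
  have hnat : ∀ n : ℕ, fracCoeff α n * sinPowMoment α 0 = fracCoeff α 0 * sinPowMoment α n := by
    intro n
    induction n with
    | zero => simp
    | succ n ih =>
      have hq : α / 2 + n + 1 ≠ 0 := by positivity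
      apply mul_left_cancel₀ hq
      push_cast
      linear_combination sinPowMoment α 0 * fracCoeff_succ hα n + (n - α / 2) * ih
        - fracCoeff α 0 / 2 * sinPowMoment_succ hα n
  obtain ⟨n, rfl | rfl⟩ := Int.eq_nat_or_neg k
  · exact hnat n
  · rw [fracCoeff_neg, Int.cast_neg, sinPowMoment_neg, Int.cast_natCast]
    exact hnat n

lemma sum_sum_mul_cos_sub (x θ : ι → ℝ) :
    ∑ i, ∑ j, x i * x j * cos (θ i - θ j) =
      (∑ i, x i * cos (θ i)) ^ 2 + (∑ i, x i * sin (θ i)) ^ 2 := by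
  simp only [sq, Finset.sum_mul_sum, ← Finset.sum_add_distrib, cos_sub]
  refine Finset.sum_congr rfl fun i _ => Finset.sum_congr rfl fun j _ => ?_
  ring

lemma sum_sum_mul_sinPowMoment_nonneg (hα : 0 ≤ α) (x b : ι → ℝ) :
    0 ≤ ∑ i, ∑ j, x i * x j * sinPowMoment α (b i - b j) := by
  have hcont : ∀ i j,
      Continuous fun t => sin t ^ α * (x i * x j * cos (2 * b i * t - 2 * b j * t)) :=
    fun i j => by fun_prop (disch := exact hα)
  have hrepr : ∑ i, ∑ j, x i * x j * sinPowMoment α (b i - b j) =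
      ∫ t in (0)..(π / 2), sin t ^ α * ∑ i, ∑ j, x i * x j * cos (2 * b i * t - 2 * b j * t) := by
    simp only [Finset.mul_sum]
    rw [integral_finsetSum fun i _ =>
      (continuous_finsetSum _ fun j _ => hcont i j).intervalIntegrable _ _]
    refine Finset.sum_congr rfl fun i _ => ?_
    rw [integral_finsetSum fun j _ => (hcont i j).intervalIntegrable _ _]
    refine Finset.sum_congr rfl fun j _ => ?_
    rw [sinPowMoment, ← integral_const_mul]
    refine integral_congr fun t _ => ?_
    ring_nf
  rw [hrepr]
  refine integral_nonneg (by positivity) fun t ht => mul_nonneg ?_ ?_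
  · exact rpow_nonneg (sin_nonneg_of_nonneg_of_le_pi ht.1 (by linarith [ht.2, pi_pos])) α
  · rw [sum_sum_mul_cos_sub]
    positivity

open Matrix in
lemma posSemidef_fracCoeff (hα : 0 ≤ α) (p : ι → ℤ) :
    (of fun i j => fracCoeff α (p i - p j)).PosSemidef := by
  have hW := sinPowMoment_zero_pos hα
  have hmoment : ∀ k : ℤ, fracCoeff α k = fracCoeff α 0 / sinPowMoment α 0 * sinPowMoment α k :=
    fun k => by rw [div_mul_eq_mul_div, eq_div_iff hW.ne', fracCoeff_mul_sinPowMoment_zero hα]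
  refine .of_dotProduct_mulVec_nonneg ?_ fun x => ?_
  · ext i j
    simp [← fracCoeff_neg (p i - p j)]
  · have hform : star x ⬝ᵥ (of fun i j => fracCoeff α (p i - p j)) *ᵥ x =
        fracCoeff α 0 / sinPowMoment α 0 *
          ∑ i, ∑ j, x i * x j * sinPowMoment α ((p i : ℝ) - p j) := by
      simp only [dotProduct, mulVec, of_apply, Finset.mul_sum, hmoment (_ - _)]
      refine Finset.sum_congr rfl fun i _ => Finset.sum_congr rfl fun j _ => ?_
      push_cast
      simp only [star_trivial]
      ring
    rw [hform]
    exact mul_nonneg (div_pos (fracCoeff_zero_pos hα) hW).le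
      (sum_sum_mul_sinPowMoment_nonneg hα x _)

end

open Matrix
open scoped MatrixOrder in
theorem stmt4_general (α : ℝ) (hα1 : 1 < α) (M : ℕ)
    (h : ℝ) (hh : 0 < h)
    (Cm : Matrix (Fin (M - 1)) (Fin (M - 1)) ℝ)
    (hC : ∀ i j, Cm i j = fracCoeff α ((i : ℤ) - (j : ℤ))) :
    ∃ S : Matrix (Fin (M - 1)) (Fin (M - 1)) ℝ, S.PosSemidef ∧ S * S = Cm ∧
      ∀ U₁ U₂ : Fin (M - 1) → ℝ,
        (h * ∑ j, (h ^ (-α) • Cm.mulVec U₁) j * U₂ j) =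
        (h * ∑ j, ((h ^ (-α / 2) • S).mulVec U₁) j * ((h ^ (-α / 2) • S).mulVec U₂) j) := by
  have hCm : Cm.PosSemidef := by
    convert posSemidef_fracCoeff (α := α) (by linarith) fun i : Fin (M - 1) => (i : ℤ)
    exact Matrix.ext hC
  set S := CFC.sqrt Cm
  have hS : S.PosSemidef := (CFC.sqrt_nonneg Cm).posSemidef
  have hSS : S * S = Cm := CFC.sqrt_mul_sqrt_self Cm hCm.nonneg
  refine ⟨S, hS, hSS, fun U₁ U₂ => ?_⟩
  have hST : Sᵀ = S := by simpa [IsSymm] using hS.isHermitian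
  have hsplit : h ^ (-α) = h ^ (-α / 2) * h ^ (-α / 2) := by
    rw [← rpow_add hh, add_halves]
  change h * (h ^ (-α) • Cm *ᵥ U₁ ⬝ᵥ U₂) =
    h * ((h ^ (-α / 2) • S) *ᵥ U₁ ⬝ᵥ (h ^ (-α / 2) • S) *ᵥ U₂)
  rw [smul_mulVec, smul_mulVec, smul_dotProduct, dotProduct_smul, smul_dotProduct,
    dotProduct_mulVec, ← mulVec_transpose, hST, mulVec_mulVec, hSS, hsplit]
  simp only [smul_eq_mul, mul_assoc]

theorem stmt4 (α : ℝ) (hα1 : 1 < α) (hα2 : α ≤ 2) (M : ℕ) (hM : 2 ≤ M)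
    (h : ℝ) (hh : 0 < h)
    (Cm : Matrix (Fin (M - 1)) (Fin (M - 1)) ℝ)
    (hC : ∀ i j, Cm i j = fracCoeff α ((i : ℤ) - (j : ℤ))) :
    ∃ S : Matrix (Fin (M - 1)) (Fin (M - 1)) ℝ, S.PosSemidef ∧ S * S = Cm ∧
      ∀ U₁ U₂ : Fin (M - 1) → ℝ,
        (h * ∑ j, (h ^ (-α) • Cm.mulVec U₁) j * U₂ j) =
        (h * ∑ j, ((h ^ (-α / 2) • S).mulVec U₁) j * ((h ^ (-α / 2) • S).mulVec U₂) j) :=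
  stmt4_general α hα1 M h hh Cm hC
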